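/- Suppose γ̃(H)² = C₀(1+(∂_ξ H₀)²) with C₀ = (γ_VS - γ_FS)², γ̃(H) = γ_FV - S(e^{-H} - 2e^{-H/2}), and lim_{ξ→+∞} H₀(ξ) = +∞, lim_{ξ→+∞} ∂_ξ H₀ = tan θ_e with θ_e ∈ (0, π/2). Then γ_FV·cos θ_e = γ_VS - γ_FS (Young's equation). -/

import Mathlib

open Real Filter

/-- Young's equation from the inner solution: if `γ̃(H₀)² = C₀(1+(∂_ξ H₀)²)` with
`C₀ = (γ_VS - γ_FS)²`, `γ̃(H) = γ_FV - S(e^{-H} - 2e^{-H/2})`, and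
`H₀(ξ) → +∞`, `∂_ξ H₀(ξ) → tan θ_e` as `ξ → +∞` with `θ_e ∈ (0, π/2)`, then
`γ_FV·cos θ_e = γ_VS - γ_FS`. -/
theorem stmt_8 (γFV γVS γFS S θe : ℝ) (hγFV : 0 < γFV) (hγVS : 0 < γVS) (hγFS : 0 < γFS)
    (hS : S = γVS - γFS - γFV) (hSneg : S < 0)
    (hwet : 0 < γVS - γFS) (hwet' : γVS - γFS < γFV)
    (hθ : θe ∈ Set.Ioo 0 (Real.pi / 2))
    (γt : ℝ → ℝ) (hγt : ∀ H, γt H = γFV - S * (Real.exp (-H) - 2 * Real.exp (-H / 2)))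
    (H₀ : ℝ → ℝ) (hH₀ : Differentiable ℝ H₀)
    (heq : ∀ ξ : ℝ, (γt (H₀ ξ)) ^ 2 = (γVS - γFS) ^ 2 * (1 + (deriv H₀ ξ) ^ 2))
    (hlim : Tendsto H₀ atTop atTop)
    (hlim' : Tendsto (deriv H₀) atTop (nhds (Real.tan θe))) :
    γFV * Real.cos θe = γVS - γFS := by
  obtain ⟨hθ0, hθ2⟩ := hθ
  have hcos : 0 < Real.cos θe := Real.cos_pos_of_mem_Ioo
    ⟨by linarith [Real.pi_pos], hθ2⟩
  -- exp(-H₀ ξ) → 0 and exp(-H₀ ξ / 2) → 0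
  have h1 : Tendsto (fun ξ => Real.exp (-H₀ ξ)) atTop (nhds 0) :=
    Real.tendsto_exp_atBot.comp (hlim.const_mul_atTop_of_neg (by norm_num : (-1:ℝ) < 0)
      |>.congr (fun x => by ring))
  have h2 : Tendsto (fun ξ => Real.exp (-H₀ ξ / 2)) atTop (nhds 0) := by
    refine Real.tendsto_exp_atBot.comp ?_
    have := hlim.const_mul_atTop_of_neg (by norm_num : (-(1:ℝ)/2) < 0)
    exact this.congr (fun x => by ring)
  have hγlim : Tendsto (fun ξ => γt (H₀ ξ)) atTop (nhds γFV) := by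
    have : Tendsto (fun ξ => γFV - S * (Real.exp (-H₀ ξ) - 2 * Real.exp (-H₀ ξ / 2)))
        atTop (nhds (γFV - S * (0 - 2 * 0))) :=
      tendsto_const_nhds.sub (tendsto_const_nhds.mul (h1.sub (tendsto_const_nhds.mul h2)))
    simpa [hγt] using this
  have hL : Tendsto (fun ξ => (γt (H₀ ξ))^2) atTop (nhds (γFV^2)) := hγlim.pow 2
  have hR : Tendsto (fun ξ => (γVS - γFS)^2 * (1 + (deriv H₀ ξ)^2)) atTop
      (nhds ((γVS - γFS)^2 * (1 + (Real.tan θe)^2))) :=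
    tendsto_const_nhds.mul (tendsto_const_nhds.add (hlim'.pow 2))
  have hkey : γFV^2 = (γVS - γFS)^2 * (1 + (Real.tan θe)^2) :=
    tendsto_nhds_unique (hL.congr (fun ξ => heq ξ)) hR
  have htan : 1 + (Real.tan θe)^2 = 1 / (Real.cos θe)^2 := by
    rw [Real.tan_eq_sin_div_cos]
    field_simp
    exact Real.cos_sq_add_sin_sq θe
  have hsq : (γFV * Real.cos θe)^2 = (γVS - γFS)^2 := by
    rw [htan] at hkey
    field_simp at hkey
    nlinarith [hkey]
  have hpos : 0 < γFV * Real.cos θe := mul_pos hγFV hcos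
  nlinarith [hsq, hpos, hwet]
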